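/- With A the n×n complex matrix defined in the context and w = diag(−1,−1,1,…,1) the n×n diagonal matrix with first two diagonal entries −1 and all others 1, for every t ∈ ℝ the first column of exp(t·A)·w equals −cos(t)·e₁ − sin(t)·u, where e₁ is the first standard basis vector of ℂⁿ and u ∈ ℂⁿ is the column vector whose first entry is z and whose remaining n−1 entries are those of v. -/

import Mathlib

/-!
On the plane spanned by `e₁` and `u`, the matrix `A` acts as the generator of a rotation:
`A e₁ = u` holds by construction, and `A u = -e₁` because `z̄ = -z` and `|z|² + ‖v‖² = 1`.
Hence `A²` acts as `-1` on `e₁` and `u`, the even and odd parts of the exponential series of `t • A`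
applied to `e₁` are the cosine and sine series, and `exp (t • A) e₁ = cos t • e₁ + sin t • u`.
Right multiplication by `w` negates the first column.
-/

open Matrix NormedSpace
open scoped Nat

theorem Matrix.pow_two_mul_mulVec_of_sq_mulVec_eq_neg {m R : Type*} [Fintype m] [DecidableEq m]
    [CommRing R] {A : Matrix m m R} {x : m → R} (h : A ^ 2 *ᵥ x = -x) (k : ℕ) :
    A ^ (2 * k) *ᵥ x = (-1) ^ k • x := by
  induction k with
  | zero => simp
  | succ k ih =>
    rw [mul_add_one, pow_add, ← mulVec_mulVec, h, mulVec_neg, ih, pow_succ, mul_neg_one, neg_smul]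

theorem Matrix.exp_smul_mulVec_eq_cos_add_sin {m : Type*} [Fintype m] [DecidableEq m]
    {A : Matrix m m ℂ} {e u : m → ℂ} (he : A *ᵥ e = u) (hu : A *ᵥ u = -e) (τ : ℂ) :
    exp (τ • A) *ᵥ e = Complex.cos τ • e + Complex.sin τ • u := by
  -- `exp` depends only on the topology; any Banach algebra norm gives access to its series.
  let : NormedRing (Matrix m m ℂ) := Matrix.linftyOpNormedRing
  let : NormedAlgebra ℂ (Matrix m m ℂ) := Matrix.linftyOpNormedAlgebra
  have heven := pow_two_mul_mulVec_of_sq_mulVec_eq_neg (A := A) (x := e)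
    (by rw [sq, ← mulVec_mulVec, he, hu])
  have hodd := pow_two_mul_mulVec_of_sq_mulVec_eq_neg (A := A) (x := u)
    (by rw [sq, ← mulVec_mulVec, hu, mulVec_neg, he])
  have hseries : HasSum (fun n => ((n !⁻¹ : ℂ) * τ ^ n) • (A ^ n *ᵥ e)) (exp (τ • A) *ᵥ e) := by
    convert (exp_series_hasSum_exp' (𝕂 := ℂ) (τ • A)).map (mulVec.addMonoidHomLeft e)
      (continuous_id.matrix_mulVec continuous_const) using 1
    · funext n
      simp only [Function.comp_apply, mulVec.addMonoidHomLeft, AddMonoidHom.coe_mk, ZeroHom.coe_mk,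
        smul_pow, smul_smul, smul_mulVec]
    · rfl
  refine hseries.unique (HasSum.even_add_odd ?_ ?_)
  · convert (Complex.hasSum_cos τ).smul_const e using 2 with k
    rw [heven]
    module
  · convert (Complex.hasSum_sin τ).smul_const u using 2 with k
    rw [pow_succ A, ← mulVec_mulVec, he, hodd]
    module

section Generator

variable {k : Type*} [Fintype k]

noncomputable def rotationGenerator (z : ℂ) (v : k → ℂ) : Matrix (Fin 1 ⊕ k) (Fin 1 ⊕ k) ℂ :=
  fromBlocks (of fun _ _ => z) (of fun _ j => -starRingEnd ℂ (v j)) (of fun i _ => v i)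
    (of fun i j => -(v i * z * starRingEnd ℂ (v j)) / ∑ l, starRingEnd ℂ (v l) * v l)

theorem rotationGenerator_mulVec_single [DecidableEq k] (z : ℂ) (v : k → ℂ) :
    rotationGenerator z v *ᵥ Pi.single (Sum.inl 0) 1 = Sum.elim (fun _ => z) v := by
  rw [mulVec_single_one]
  funext i
  rcases i with i | i <;> rfl

open ComplexOrder in
theorem rotationGenerator_mulVec_elim [DecidableEq k] {z : ℂ} {v : k → ℂ}
    (hz : z + starRingEnd ℂ z = 0) (hv : v ≠ 0)
    (hnorm : z * starRingEnd ℂ z + ∑ i, starRingEnd ℂ (v i) * v i = 1) :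
    rotationGenerator z v *ᵥ Sum.elim (fun _ => z) v = -Pi.single (Sum.inl 0) 1 := by
  set S := ∑ i, starRingEnd ℂ (v i) * v i with hS_def
  have hS : S ≠ 0 := dotProduct_star_self_eq_zero.not.mpr hv
  funext i
  rcases i with i | i
  · obtain rfl := Subsingleton.elim i 0
    simp only [mulVec, dotProduct, rotationGenerator, Fintype.sum_sum_type, Finset.univ_unique,
      Fin.default_eq_zero, fromBlocks_apply₁₁, fromBlocks_apply₁₂, of_apply, Sum.elim_inl,
      Sum.elim_inr, Finset.sum_const, Finset.card_singleton, one_smul, neg_mul,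
      Finset.sum_neg_distrib, Pi.neg_apply, Pi.single_eq_same, ← hS_def]
    linear_combination z * hz - hnorm
  · have hterm : ∀ j, -(v i * z * starRingEnd ℂ (v j)) / S * v j
        = -(v i * z) / S * (starRingEnd ℂ (v j) * v j) := fun j => by ring
    simp only [mulVec, dotProduct, rotationGenerator, Fintype.sum_sum_type, Finset.univ_unique,
      Fin.default_eq_zero, fromBlocks_apply₂₁, fromBlocks_apply₂₂, of_apply, Sum.elim_inl,
      Sum.elim_inr, Finset.sum_const, Finset.card_singleton, one_smul, Pi.neg_apply,
      Pi.single_apply, reduceCtorEq, if_false, neg_zero, hterm, ← Finset.mul_sum, ← hS_def,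
      div_mul_cancel₀ _ hS]
    ring

end Generator

theorem stmt_6 (n : ℕ) (z : ℂ) (hz : z + starRingEnd ℂ z = 0)
    (v : Fin (n - 1) → ℂ) (hv : v ≠ 0)
    (hnorm : z * starRingEnd ℂ z + ∑ i, starRingEnd ℂ (v i) * v i = 1)
    (A w : Matrix (Fin 1 ⊕ Fin (n - 1)) (Fin 1 ⊕ Fin (n - 1)) ℂ)
    (hA : A = Matrix.fromBlocks
      (Matrix.of fun _ _ => z)
      (Matrix.of fun _ j => -starRingEnd ℂ (v j))
      (Matrix.of fun i _ => v i)
      (Matrix.of fun i j =>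
        -(v i * z * starRingEnd ℂ (v j)) / (∑ k, starRingEnd ℂ (v k) * v k)))
    (hw : w = Matrix.diagonal (fun i => match i with
      | Sum.inl _ => (-1 : ℂ)
      | Sum.inr j => if (j : ℕ) = 0 then -1 else 1)) :
    ∀ t : ℝ,
      (fun i => (NormedSpace.exp (t • A) * w) i (Sum.inl 0)) =
        fun i => -(Real.cos t : ℂ) * (Pi.single (Sum.inl 0) 1 : Fin 1 ⊕ Fin (n - 1) → ℂ) i
          - (Real.sin t : ℂ) * Sum.elim (fun _ : Fin 1 => z) v i := by
  intro t
  change A = rotationGenerator z v at hA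
  have hrot := exp_smul_mulVec_eq_cos_add_sin (hA ▸ rotationGenerator_mulVec_single z v)
    (hA ▸ rotationGenerator_mulVec_elim hz hv hnorm) t
  rw [Complex.coe_smul, ← Complex.ofReal_cos, ← Complex.ofReal_sin] at hrot
  funext i
  rw [hw, mul_diagonal, ← col_apply (NormedSpace.exp (t • A)), ← mulVec_single_one, hrot]
  simp only [Pi.add_apply, Pi.smul_apply, smul_eq_mul]
  ring
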